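/- arXiv:2602.18310 — 4 statements merged into one kernel-verified Lean document; each statement's English description precedes it below -/
import Mathlib

section
/- There are exactly 3 periodic maximal independent sets of the triangular lattice of density 1/3: a set S ⊆ ℤ² is a (v₁,v₂)-periodic maximal independent set (for some v₁,v₂ ≥ 1) satisfying 3·|S ∩ D| = v₁·v₂ if and only if S = {(i,j) ∈ ℤ² : i + 2j ≡ c (mod 3)} for some c ∈ {0,1,2}; these three sets are pairwise distinct. -/
/-- Adjacency in the triangular lattice, modeled on `ℤ × ℤ`. -/
def TriAdj (u v : ℤ × ℤ) : Prop :=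
  (u.1 - v.1, u.2 - v.2) ∈
    ({(1, 0), (-1, 0), (0, 1), (0, -1), (1, -1), (-1, 1)} : Finset (ℤ × ℤ))

/-- A set of sites is independent if no two of its elements are adjacent. -/
def IsIndependent (S : Set (ℤ × ℤ)) : Prop :=
  ∀ u ∈ S, ∀ v ∈ S, ¬ TriAdj u v

/-- Maximal independent set of the triangular lattice. -/
def IsMIS (S : Set (ℤ × ℤ)) : Prop :=
  IsIndependent S ∧ ∀ u ∉ S, ∃ v ∈ S, TriAdj u v

/-- `S` is `(v₁, v₂)`-periodic. -/
def IsPeriodic (v₁ v₂ : ℤ) (S : Set (ℤ × ℤ)) : Prop :=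
  (∀ p : ℤ × ℤ, p ∈ S ↔ (p.1 + v₁, p.2) ∈ S) ∧
  (∀ p : ℤ × ℤ, p ∈ S ↔ (p.1, p.2 + v₂) ∈ S)

/-- The fundamental domain `D = {0,…,v₁−1} × {0,…,v₂−1}`. -/
def FundDomain (v₁ v₂ : ℤ) : Set (ℤ × ℤ) :=
  {p | 0 ≤ p.1 ∧ p.1 < v₁ ∧ 0 ≤ p.2 ∧ p.2 < v₂}

/-- The sublattice `{(i,j) : i + 2j ≡ c (mod 3)}`. -/
def DenseState (c : ZMod 3) : Set (ℤ × ℤ) :=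
  {p | ((p.1 + 2 * p.2 : ℤ) : ZMod 3) = c}

/-!
Reducing `S` modulo its periods gives a set `A` on the torus `ZMod v₁ × ZMod v₂`. Every point of
the torus lies in exactly three translates of the triangle `{0, (1,0), (0,1)}`, and by
independence each translate contains at most one point of `A`; as there are `v₁ v₂ = 3 |A|`
translates, each of them contains exactly one. The same holds for `{(1,0), (0,1), (1,1)}`. An
independent set meeting every such triangle is invariant under `(1,1)` and `(2,-1)`, which generate
the kernel of `(i, j) ↦ i + 2j mod 3`; hence it contains one of the classes `DenseState c`, and
since that class is already a maximal independent set, it is equal to it.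
-/

open Finset AddAction Pointwise

instance : DecidableRel TriAdj := fun u v => by unfold TriAdj; infer_instance

lemma triAdj_add_add_iff (q a b : ℤ × ℤ) : TriAdj (q + a) (q + b) ↔ TriAdj a b := by
  simp only [TriAdj, Prod.fst_add, Prod.snd_add, add_sub_add_left_eq_sub]

lemma triAdj_iff_sub (u v : ℤ × ℤ) : TriAdj u v ↔ TriAdj (u - v) 0 := by
  simpa using triAdj_add_add_iff v (u - v) 0

section Counting

variable {G ι : Type*} [AddCommGroup G] [Fintype G] (P : G → Prop) [DecidablePred P]
  (s : Finset ι) (φ : ι → G)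

lemma sum_card_filter_add_mem :
    ∑ p, #{i ∈ s | P (p + φ i)} = #s * #{x | P x} := by
  simp only [card_filter]
  rw [sum_comm, ← smul_eq_mul, ← sum_const]
  refine sum_congr rfl fun i _ => ?_
  exact Equiv.sum_comp (Equiv.addRight (φ i)) fun x => if P x then 1 else 0

lemma exists_add_mem_of_card_mul_eq (hle : ∀ p, #{i ∈ s | P (p + φ i)} ≤ 1)
    (hcard : #s * #{x | P x} = Fintype.card G) (p : G) : ∃ i ∈ s, P (p + φ i) := by
  by_contra! hp
  have hzero : #{i ∈ s | P (p + φ i)} < 1 := by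
    simpa [filter_eq_empty_iff] using hp
  have := sum_lt_sum (s := univ) (fun q _ => hle q) ⟨p, mem_univ p, hzero⟩
  simp [sum_card_filter_add_mem, hcard] at this

end Counting

section Stabilizer

variable {G : Type*} [AddCommGroup G] {S : Set G}

lemma mem_stabilizer_of_add_mem {v : G} (hpos : ∀ p ∈ S, p + v ∈ S) (hneg : ∀ p ∈ S, p + -v ∈ S) :
    v ∈ stabilizer G S := by
  refine mem_stabilizer_set.2 fun p => ⟨fun hp => ?_, fun hp => ?_⟩
  · simpa [vadd_eq_add] using hneg _ hp
  · simpa [vadd_eq_add, add_comm] using hpos p hp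

lemma mem_iff_of_sub_mem_stabilizer {p q : G} (h : p - q ∈ stabilizer G S) : p ∈ S ↔ q ∈ S := by
  simpa using mem_stabilizer_set.1 h q

end Stabilizer

lemma IsPeriodic.mem_stabilizer {v₁ v₂ : ℤ} {S : Set (ℤ × ℤ)} (hS : IsPeriodic v₁ v₂ S) :
    (v₁, 0) ∈ stabilizer (ℤ × ℤ) S ∧ (0, v₂) ∈ stabilizer (ℤ × ℤ) S := by
  refine ⟨mem_stabilizer_set.2 fun ⟨a, b⟩ => ?_, mem_stabilizer_set.2 fun ⟨a, b⟩ => ?_⟩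
  · simpa [add_comm] using (hS.1 (a, b)).symm
  · simpa [add_comm] using (hS.2 (a, b)).symm

lemma IsMIS.eq_of_subset {S T : Set (ℤ × ℤ)} (hT : IsMIS T) (hS : IsIndependent S) (hTS : T ⊆ S) :
    S = T := by
  refine Set.Subset.antisymm (fun u hu => ?_) hTS
  by_contra huT
  obtain ⟨v, hv, huv⟩ := hT.2 u huT
  exact hS u hu v (hTS hv) huv

section Torus

variable (w h : ℕ)

def torusProj : ℤ × ℤ →+ ZMod w × ZMod h :=
  (Int.castAddHom (ZMod w)).prodMap (Int.castAddHom (ZMod h))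

def torusRep (x : ZMod w × ZMod h) : ℤ × ℤ := ((x.1.val : ℤ), (x.2.val : ℤ))

variable {w h}

lemma ker_torusProj_le_stabilizer {S : Set (ℤ × ℤ)} (hS : IsPeriodic w h S) :
    (torusProj w h).ker ≤ stabilizer (ℤ × ℤ) S := by
  intro q hq
  have hdvd : (w : ℤ) ∣ q.1 ∧ (h : ℤ) ∣ q.2 := by
    simpa [torusProj, Prod.ext_iff, ZMod.intCast_zmod_eq_zero_iff_dvd] using hq
  obtain ⟨⟨a, ha⟩, ⟨b, hb⟩⟩ := hdvd
  have hq : q = a • ((w : ℤ), 0) + b • (0, (h : ℤ)) := by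
    ext <;> simp [ha, hb, mul_comm]
  rw [hq]
  exact add_mem (zsmul_mem hS.mem_stabilizer.1 a) (zsmul_mem hS.mem_stabilizer.2 b)

variable [NeZero w] [NeZero h]

lemma torusProj_torusRep (x : ZMod w × ZMod h) : torusProj w h (torusRep w h x) = x := by
  simp [torusProj, torusRep]

lemma torusRep_mem_fundDomain (x : ZMod w × ZMod h) : torusRep w h x ∈ FundDomain w h := by
  simp [torusRep, FundDomain, -ZMod.natCast_val, ZMod.val_lt]

lemma torusRep_torusProj {r : ℤ × ℤ} (hr : r ∈ FundDomain w h) :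
    torusRep w h (torusProj w h r) = r := by
  obtain ⟨h1, h2, h3, h4⟩ := hr
  ext
  · simpa [torusRep, torusProj, -ZMod.natCast_val, ZMod.val_intCast] using Int.emod_eq_of_lt h1 h2
  · simpa [torusRep, torusProj, -ZMod.natCast_val, ZMod.val_intCast] using Int.emod_eq_of_lt h3 h4

variable {S : Set (ℤ × ℤ)}

lemma ncard_inter_fundDomain [DecidablePred (· ∈ S)] :
    (S ∩ FundDomain w h).ncard = #{x | torusRep w h x ∈ S} := by
  have hS' : S ∩ FundDomain w h = torusRep w h '' {x | torusRep w h x ∈ S} := by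
    ext r
    constructor
    · rintro ⟨hrS, hrD⟩
      exact ⟨torusProj w h r, by rwa [Set.mem_ofPred_eq, torusRep_torusProj hrD],
        torusRep_torusProj hrD⟩
    · rintro ⟨x, hx, rfl⟩
      exact ⟨hx, torusRep_mem_fundDomain x⟩
  rw [hS', Set.ncard_image_of_injective _ (Function.LeftInverse.injective torusProj_torusRep),
    ← Set.ncard_coe_finset]
  simp

lemma mem_iff_torusRep_torusProj_mem (hS : IsPeriodic w h S) (q : ℤ × ℤ) :
    q ∈ S ↔ torusRep w h (torusProj w h q) ∈ S :=
  mem_iff_of_sub_mem_stabilizer <| ker_torusProj_le_stabilizer hS <| by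
    simp [torusProj_torusRep]

end Torus

lemma card_filter_add_mem_le_one {S : Set (ℤ × ℤ)} [DecidablePred (· ∈ S)] (hind : IsIndependent S)
    {F : Finset (ℤ × ℤ)} (hF : (F : Set (ℤ × ℤ)).Pairwise TriAdj) (q : ℤ × ℤ) :
    #{f ∈ F | q + f ∈ S} ≤ 1 := by
  refine card_le_one.2 fun a ha b hb => ?_
  rw [mem_filter] at ha hb
  by_contra hab
  exact hind _ ha.2 _ hb.2 ((triAdj_add_add_iff q a b).2 (hF ha.1 hb.1 hab))

lemma exists_add_mem_of_density {w h : ℕ} [NeZero w] [NeZero h] {S : Set (ℤ × ℤ)}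
    (hS : IsPeriodic w h S) (hind : IsIndependent S)
    (hdens : 3 * (S ∩ FundDomain w h).ncard = w * h) {F : Finset (ℤ × ℤ)} (hF : #F = 3)
    (hFadj : (F : Set (ℤ × ℤ)).Pairwise TriAdj) (q : ℤ × ℤ) : ∃ f ∈ F, q + f ∈ S := by
  classical
  have hmem := mem_iff_torusRep_torusProj_mem hS
  have hle : ∀ x, #{f ∈ F | torusRep w h (x + torusProj w h f) ∈ S} ≤ 1 := by
    intro x
    obtain ⟨r, rfl⟩ : ∃ r, torusProj w h r = x := ⟨_, torusProj_torusRep x⟩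
    simpa only [← map_add, ← hmem] using card_filter_add_mem_le_one hind hFadj r
  rw [ncard_inter_fundDomain] at hdens
  obtain ⟨f, hf, hfS⟩ := exists_add_mem_of_card_mul_eq (torusRep w h · ∈ S) F (torusProj w h) hle
    (by simpa [hF, ZMod.card] using hdens) (torusProj w h q)
  exact ⟨f, hf, (hmem _).2 (by rwa [map_add])⟩

def upTriangle : Finset (ℤ × ℤ) := {0, (1, 0), (0, 1)}

def downTriangle : Finset (ℤ × ℤ) := {(1, 0), (0, 1), (1, 1)}

lemma card_upTriangle : #upTriangle = 3 := by decide

lemma card_downTriangle : #downTriangle = 3 := by decide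

lemma pairwise_triAdj_upTriangle : (upTriangle : Set (ℤ × ℤ)).Pairwise TriAdj := by
  simp [upTriangle, Set.pairwise_insert, TriAdj]

lemma pairwise_triAdj_downTriangle : (downTriangle : Set (ℤ × ℤ)).Pairwise TriAdj := by
  simp [downTriangle, Set.pairwise_insert, TriAdj]

lemma add_mem_of_forall_exists_add_mem {S : Set (ℤ × ℤ)} (hind : IsIndependent S)
    {F : Finset (ℤ × ℤ)} (hcov : ∀ q, ∃ f ∈ F, q + f ∈ S) {p : ℤ × ℤ} (hp : p ∈ S)
    (q f₀ : ℤ × ℤ) {v : ℤ × ℤ} (hv : q + f₀ = v) (hadj : ∀ f ∈ F, f ≠ f₀ → TriAdj (q + f) 0) :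
    p + v ∈ S := by
  subst hv
  obtain ⟨f, hf, hfS⟩ := hcov (p + q)
  rw [add_assoc] at hfS
  obtain rfl | hff := eq_or_ne f f₀
  · exact hfS
  · refine absurd ?_ (hind _ hfS _ hp)
    simpa using (triAdj_add_add_iff p _ 0).2 (hadj f hf hff)

def denseLabel : ℤ × ℤ →+ ZMod 3 :=
  AddMonoidHom.mk' (fun p => ((p.1 + 2 * p.2 : ℤ) : ZMod 3)) fun p q => by
    simp only [Prod.fst_add, Prod.snd_add]
    push_cast
    ring

lemma denseState_eq_preimage (c : ZMod 3) : DenseState c = denseLabel ⁻¹' {c} := rfl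

lemma ker_denseLabel_le_stabilizer {S : Set (ℤ × ℤ)} (hind : IsIndependent S)
    (hup : ∀ q, ∃ f ∈ upTriangle, q + f ∈ S) (hdown : ∀ q, ∃ f ∈ downTriangle, q + f ∈ S) :
    denseLabel.ker ≤ stabilizer (ℤ × ℤ) S := by
  have hdiag : ((1, 1) : ℤ × ℤ) ∈ stabilizer (ℤ × ℤ) S := mem_stabilizer_of_add_mem
    (fun _ hp => add_mem_of_forall_exists_add_mem hind hdown hp 0 (1, 1) rfl (by decide))
    (fun _ hp => add_mem_of_forall_exists_add_mem hind hup hp (-1, -1) 0 rfl (by decide))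
  have hskew : ((2, -1) : ℤ × ℤ) ∈ stabilizer (ℤ × ℤ) S := mem_stabilizer_of_add_mem
    (fun _ hp => add_mem_of_forall_exists_add_mem hind hup hp (1, -1) (1, 0) rfl (by decide))
    (fun _ hp => add_mem_of_forall_exists_add_mem hind hdown hp (-2, 0) (0, 1) rfl (by decide))
  intro v hv
  obtain ⟨k, hk⟩ : (3 : ℤ) ∣ v.1 + 2 * v.2 :=
    (ZMod.intCast_zmod_eq_zero_iff_dvd _ 3).1 hv
  have hv : v = k • ((1, 1) : ℤ × ℤ) + (k - v.2) • ((2, -1) : ℤ × ℤ) := by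
    ext
    · simp only [Prod.fst_add, Prod.smul_fst, smul_eq_mul]
      linarith
    · simp
  rw [hv]
  exact add_mem (zsmul_mem hdiag k) (zsmul_mem hskew _)

lemma denseState_subset {S : Set (ℤ × ℤ)} (hker : denseLabel.ker ≤ stabilizer (ℤ × ℤ) S)
    {s : ℤ × ℤ} (hs : s ∈ S) : DenseState (denseLabel s) ⊆ S := fun p hp =>
  (mem_iff_of_sub_mem_stabilizer (hker (by rwa [AddMonoidHom.mem_ker, map_sub, sub_eq_zero]))).2 hs

lemma denseLabel_ne_zero_of_triAdj {v : ℤ × ℤ} (hv : TriAdj v 0) : denseLabel v ≠ 0 := by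
  obtain ⟨a, b⟩ := v
  simp only [TriAdj, Prod.fst_zero, Prod.snd_zero, sub_zero] at hv
  fin_cases hv <;> decide

lemma isIndependent_denseState (c : ZMod 3) : IsIndependent (DenseState c) := by
  intro u hu v hv huv
  refine denseLabel_ne_zero_of_triAdj ((triAdj_iff_sub u v).1 huv) ?_
  rw [map_sub, sub_eq_zero]
  exact hu.trans hv.symm

lemma isMIS_denseState (c : ZMod 3) : IsMIS (DenseState c) := by
  refine ⟨isIndependent_denseState c, fun u hu => ?_⟩
  obtain ⟨n, hn, hnc⟩ :
      ∃ n ∈ ({(1, 0), (-1, 0)} : Finset (ℤ × ℤ)), denseLabel n = c - denseLabel u := by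
    have : c - denseLabel u ≠ 0 := sub_ne_zero.2 (Ne.symm hu)
    generalize c - denseLabel u = e at this
    revert e
    decide
  refine ⟨u + n, show denseLabel (u + n) = c by rw [map_add, hnc, add_sub_cancel], ?_⟩
  simpa using (triAdj_add_add_iff u 0 n).2 (by fin_cases hn <;> decide)

lemma isPeriodic_denseState (c : ZMod 3) : IsPeriodic 3 3 (DenseState c) := by
  refine ⟨fun p => ?_, fun p => ?_⟩ <;>
  · simp only [DenseState, Set.mem_ofPred_eq]
    push_cast
    reduce_mod_char
    rfl

instance (c : ZMod 3) : DecidablePred (· ∈ DenseState c) := fun p =>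
  inferInstanceAs (Decidable (denseLabel p = c))

lemma ncard_denseState_inter_fundDomain (c : ZMod 3) :
    (DenseState c ∩ FundDomain 3 3).ncard = 3 := by
  refine (ncard_inter_fundDomain (w := 3) (h := 3)).trans ?_
  revert c
  decide

lemma exists_eq_denseState_of_density {w h : ℕ} [NeZero w] [NeZero h] {S : Set (ℤ × ℤ)}
    (hS : IsPeriodic w h S) (hind : IsIndependent S)
    (hdens : 3 * (S ∩ FundDomain w h).ncard = w * h) : ∃ c, S = DenseState c := by
  have hup := exists_add_mem_of_density hS hind hdens card_upTriangle pairwise_triAdj_upTriangle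
  have hdown :=
    exists_add_mem_of_density hS hind hdens card_downTriangle pairwise_triAdj_downTriangle
  obtain ⟨f, -, hf⟩ := hup 0
  exact ⟨_, (isMIS_denseState _).eq_of_subset hind
    (denseState_subset (ker_denseLabel_le_stabilizer hind hup hdown) hf)⟩

lemma denseState_injective : Function.Injective DenseState := by
  have hsurj : Function.Surjective denseLabel := fun c => ⟨((c.val : ℤ), 0), by simp [denseLabel]⟩
  intro c c' h
  rw [denseState_eq_preimage, denseState_eq_preimage] at h
  exact Set.singleton_injective (Set.preimage_injective.2 hsurj h)

/-- There are exactly 3 periodic maximal independent sets of the triangular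
lattice of density `1/3`: they are the sets `{(i,j) : i + 2j ≡ c (mod 3)}`,
`c ∈ {0,1,2}`, and these three sets are pairwise distinct. -/
theorem dense_PGS_classification :
    (∀ S : Set (ℤ × ℤ),
        (∃ v₁ v₂ : ℤ, 1 ≤ v₁ ∧ 1 ≤ v₂ ∧ IsPeriodic v₁ v₂ S ∧ IsMIS S ∧
            3 * ((S ∩ FundDomain v₁ v₂).ncard : ℤ) = v₁ * v₂) ↔
          ∃ c : ZMod 3, S = DenseState c) ∧
    (∀ c c' : ZMod 3, c ≠ c' → DenseState c ≠ DenseState c') := by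
  refine ⟨fun S => ⟨?_, ?_⟩, fun c c' => denseState_injective.ne⟩
  · rintro ⟨v₁, v₂, hv₁, hv₂, hS, hmis, hdens⟩
    lift v₁ to ℕ using by omega
    lift v₂ to ℕ using by omega
    have : NeZero v₁ := ⟨by omega⟩
    have : NeZero v₂ := ⟨by omega⟩
    exact exists_eq_denseState_of_density hS hmis.1 (by exact_mod_cast hdens)
  · rintro ⟨c, rfl⟩
    refine ⟨3, 3, by norm_num, by norm_num, isPeriodic_denseState c, isMIS_denseState c, ?_⟩
    rw [ncard_denseState_inter_fundDomain]
    norm_num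
end

section
/- Every maximal configuration on a rectangle is compatible: if n, m ≥ 1 and T ⊆ Λ_{n,m} is a maximal configuration on Λ_{n,m}, then there exists a maximal independent set S of ℤ² (with the triangular-lattice adjacency) such that S ∩ Λ_{n,m} = T. -/
/-- The box `{a,…,b} × {c,…,d} ⊆ ℤ²`. -/
def Box (a b c d : ℤ) : Set (ℤ × ℤ) :=
  {p | a ≤ p.1 ∧ p.1 ≤ b ∧ c ≤ p.2 ∧ p.2 ≤ d}

/-- The rectangle `Λ_{n,m} = {1,…,n} × {1,…,m}`. -/
def Rect (n m : ℤ) : Set (ℤ × ℤ) := Box 1 n 1 m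

/-- `T` is a maximal configuration on the region `Λ`: `T ⊆ Λ`, `T` is
independent, and every site of `Λ \ T` has a neighbor in `T`. -/
def IsMaxConfig (Λ T : Set (ℤ × ℤ)) : Prop :=
  T ⊆ Λ ∧ IsIndependent T ∧ ∀ u ∈ Λ \ T, ∃ v ∈ T, TriAdj u v

/-- `T` is a compatible configuration on the region `Λ`: it is the restriction
to `Λ` of some maximal independent set of the whole lattice. -/
def IsCompatConfig (Λ T : Set (ℤ × ℤ)) : Prop :=
  ∃ S : Set (ℤ × ℤ), IsMIS S ∧ S ∩ Λ = T

lemma triAdj_symm {u v : ℤ × ℤ} (h : TriAdj u v) : TriAdj v u := by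
  simp only [TriAdj, Finset.mem_insert, Finset.mem_singleton, Prod.mk.injEq] at h ⊢
  omega

lemma triAdj_irrefl (u : ℤ × ℤ) : ¬ TriAdj u u := by
  simp only [TriAdj, Finset.mem_insert, Finset.mem_singleton, Prod.mk.injEq]
  omega

lemma IsIndependent.insert {S : Set (ℤ × ℤ)} {u : ℤ × ℤ} (hS : IsIndependent S)
    (hu : ∀ v ∈ S, ¬ TriAdj u v) : IsIndependent (insert u S) := by
  rintro a (rfl | ha) b (rfl | hb) hab
  · exact triAdj_irrefl _ hab
  · exact hu b hb hab
  · exact hu a ha (triAdj_symm hab)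
  · exact hS a ha b hb hab

lemma isIndependent_sUnion_of_isChain {c : Set (Set (ℤ × ℤ))}
    (hc : ∀ s ∈ c, IsIndependent s) (hchain : IsChain (· ⊆ ·) c) : IsIndependent (⋃₀ c) := by
  rintro a ⟨s, hs, has⟩ b ⟨t, ht, hbt⟩
  rcases hchain.total hs ht with hst | hts
  · exact hc t ht a (hst has) b hbt
  · exact hc s hs a has b (hts hbt)

lemma isMIS_of_maximal {S : Set (ℤ × ℤ)} (hS : Maximal IsIndependent S) : IsMIS S := by
  refine ⟨hS.prop, fun u hu => ?_⟩
  by_contra! hno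
  exact hu (hS.mem_of_prop_insert (hS.prop.insert hno))

lemma IsIndependent.exists_isMIS_superset {T : Set (ℤ × ℤ)} (hT : IsIndependent T) :
    ∃ S, T ⊆ S ∧ IsMIS S := by
  obtain ⟨S, hTS, hS⟩ := zorn_subset_nonempty {S | IsIndependent S}
    (fun c hc hchain _ => ⟨⋃₀ c, isIndependent_sUnion_of_isChain hc hchain,
      fun _ => Set.subset_sUnion_of_mem⟩) T hT
  exact ⟨S, hTS, isMIS_of_maximal hS⟩

lemma IsMaxConfig.inter_eq_of_subset {Λ T S : Set (ℤ × ℤ)} (hT : IsMaxConfig Λ T)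
    (hS : IsIndependent S) (hTS : T ⊆ S) : S ∩ Λ = T := by
  refine Set.Subset.antisymm (fun u ⟨huS, huΛ⟩ => ?_) fun u hu => ⟨hTS hu, hT.1 hu⟩
  by_contra huT
  obtain ⟨v, hvT, huv⟩ := hT.2.2 u ⟨huΛ, huT⟩
  exact hS u huS v (hTS hvT) huv

lemma IsMaxConfig.isCompatConfig {Λ T : Set (ℤ × ℤ)} (hT : IsMaxConfig Λ T) :
    IsCompatConfig Λ T := by
  obtain ⟨S, hTS, hS⟩ := hT.2.1.exists_isMIS_superset
  exact ⟨S, hS, hT.inter_eq_of_subset hS.1 hTS⟩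

theorem maxConfig_compatible_general (n m : ℤ)
    (T : Set (ℤ × ℤ)) (hT : IsMaxConfig (Rect n m) T) :
    ∃ S : Set (ℤ × ℤ), IsMIS S ∧ S ∩ Rect n m = T :=
  hT.isCompatConfig

/-- Every maximal configuration on a rectangle is compatible: it extends to a
maximal independent set of the whole triangular lattice. -/
theorem maxConfig_compatible (n m : ℤ) (hn : 1 ≤ n) (hm : 1 ≤ m)
    (T : Set (ℤ × ℤ)) (hT : IsMaxConfig (Rect n m) T) :
    ∃ S : Set (ℤ × ℤ), IsMIS S ∧ S ∩ Rect n m = T :=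
  maxConfig_compatible_general n m T hT
end

section
/- The recoverable system X(𝔸) is strongly irreducible with r = 4: for any two finite sets A, B ⊆ ℤ² such that the triangular-lattice graph distance between every point of A and every point of B is at least 4, and any two maximal independent sets S and T of ℤ², there exists a maximal independent set U of ℤ² with U ∩ A = S ∩ A and U ∩ B = T ∩ B. -/
/-- The triangular lattice as a simple graph on `ℤ × ℤ`. -/
def triGraph : SimpleGraph (ℤ × ℤ) where
  Adj := TriAdj
  symm := by
    constructor
    intro u v h
    simp only [TriAdj, Finset.mem_insert, Finset.mem_singleton, Prod.mk.injEq] at h ⊢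
    omega
  loopless := by
    constructor
    intro u h
    simp only [TriAdj, Finset.mem_insert, Finset.mem_singleton, Prod.mk.injEq] at h
    omega

namespace SimpleGraph

variable {V : Type*} {G : SimpleGraph V}

theorem exists_maximal_isIndepSet_superset {s : Set V} (hs : G.IsIndepSet s) :
    ∃ t, s ⊆ t ∧ Maximal G.IsIndepSet t :=
  zorn_subset_nonempty {t | G.IsIndepSet t}
    (fun _ hc hchain _ => ⟨_, (Set.pairwise_sUnion hchain.directedOn).2 hc,
      fun _ => Set.subset_sUnion_of_mem⟩) s hs

theorem maximal_isIndepSet_iff_forall_exists_adj {s : Set V} :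
    Maximal G.IsIndepSet s ↔ G.IsIndepSet s ∧ ∀ u ∉ s, ∃ v ∈ s, G.Adj u v := by
  refine ⟨fun h => ⟨h.prop, fun u hu => ?_⟩, fun ⟨hs, hdom⟩ => ⟨hs, fun t ht hst u hu => ?_⟩⟩
  · by_contra! hno
    refine hu (h.mem_of_prop_insert (Set.pairwise_insert.2 ⟨h.prop, fun v hv _ => ?_⟩))
    exact ⟨hno v hv, fun hvu => hno v hv hvu.symm⟩
  · by_contra hus
    obtain ⟨v, hv, huv⟩ := hdom u hus
    exact ht hu (hst hv) huv.ne huv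

theorem coe_dist_le_edist (u v : V) : (G.dist u v : ℕ∞) ≤ G.edist u v := by
  by_cases h : G.Reachable u v
  · exact h.coe_dist_eq_edist.le
  · simp [edist_eq_top_of_not_reachable h]

/-- The closed neighbourhood of `A`; balls are open, so `G.ball a 2` is `a` with its neighbours. -/
def closedNbhdSet (G : SimpleGraph V) (A : Set V) : Set V := ⋃ a ∈ A, G.ball a 2

theorem mem_closedNbhdSet {A : Set V} {u : V} :
    u ∈ G.closedNbhdSet A ↔ ∃ a ∈ A, G.Adj a u ∨ a = u := by
  simp [closedNbhdSet, or_comm, eq_comm]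

theorem exists_edist_le_three_of_adj {A B : Set V} {u v : V} (hu : u ∈ G.closedNbhdSet A)
    (hv : v ∈ G.closedNbhdSet B) (huv : G.Adj u v) : ∃ a ∈ A, ∃ b ∈ B, G.edist a b ≤ 3 := by
  obtain ⟨a, ha, hau⟩ := mem_closedNbhdSet.1 hu
  obtain ⟨b, hb, hbv⟩ := mem_closedNbhdSet.1 hv
  refine ⟨a, ha, b, hb, ?_⟩
  calc G.edist a b ≤ G.edist a u + (G.edist u v + G.edist v b) :=
        G.edist_triangle.trans (by gcongr; exact G.edist_triangle)
    _ ≤ 1 + (1 + 1) := by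
        gcongr
        · exact edist_le_one_iff_adj_or_eq.2 hau
        · exact (edist_eq_one_iff_adj.2 huv).le
        · rw [edist_comm]; exact edist_le_one_iff_adj_or_eq.2 hbv
    _ = 3 := by norm_num

theorem IsIndepSet.inter_eq_of_inter_closedNbhdSet_subset {S U A : Set V}
    (hS : Maximal G.IsIndepSet S) (hU : G.IsIndepSet U) (hSU : S ∩ G.closedNbhdSet A ⊆ U) :
    U ∩ A = S ∩ A := by
  ext a
  refine and_congr_left fun ha =>
    ⟨fun haU => ?_, fun haS => hSU ⟨haS, mem_closedNbhdSet.2 ⟨a, ha, Or.inr rfl⟩⟩⟩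
  by_contra haS
  obtain ⟨s, hs, has⟩ := (maximal_isIndepSet_iff_forall_exists_adj.1 hS).2 a haS
  exact hU haU (hSU ⟨hs, mem_closedNbhdSet.2 ⟨a, ha, Or.inl has⟩⟩) has.ne has

theorem exists_maximal_isIndepSet_inter_eq_of_lt_edist {S T A B : Set V}
    (hS : Maximal G.IsIndepSet S) (hT : Maximal G.IsIndepSet T)
    (hAB : ∀ a ∈ A, ∀ b ∈ B, 3 < G.edist a b) :
    ∃ U, Maximal G.IsIndepSet U ∧ U ∩ A = S ∩ A ∧ U ∩ B = T ∩ B := by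
  have hnot_adj : ∀ u ∈ G.closedNbhdSet A, ∀ v ∈ G.closedNbhdSet B, ¬G.Adj u v := by
    intro u hu v hv huv
    obtain ⟨a, ha, b, hb, hab⟩ := exists_edist_le_three_of_adj hu hv huv
    exact (hAB a ha b hb).not_ge hab
  have hglued : G.IsIndepSet (S ∩ G.closedNbhdSet A ∪ T ∩ G.closedNbhdSet B) :=
    Set.pairwise_union.2 ⟨hS.prop.mono Set.inter_subset_left, hT.prop.mono Set.inter_subset_left,
      fun u hu v hv _ => ⟨hnot_adj u hu.2 v hv.2, fun hvu => hnot_adj u hu.2 v hv.2 hvu.symm⟩⟩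
  obtain ⟨U, hsub, hU⟩ := exists_maximal_isIndepSet_superset hglued
  exact ⟨U, hU,
    hU.prop.inter_eq_of_inter_closedNbhdSet_subset hS (Set.subset_union_left.trans hsub),
    hU.prop.inter_eq_of_inter_closedNbhdSet_subset hT (Set.subset_union_right.trans hsub)⟩

end SimpleGraph

theorem isIndependent_iff_isIndepSet {S : Set (ℤ × ℤ)} :
    IsIndependent S ↔ triGraph.IsIndepSet S :=
  ⟨fun h _ hu _ hv _ => h _ hu _ hv, fun h _ hu _ hv huv => h hu hv (triGraph.ne_of_adj huv) huv⟩

theorem isMIS_iff_maximal_isIndepSet {S : Set (ℤ × ℤ)} :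
    IsMIS S ↔ Maximal triGraph.IsIndepSet S := by
  rw [SimpleGraph.maximal_isIndepSet_iff_forall_exists_adj, ← isIndependent_iff_isIndepSet]
  rfl

theorem strongly_irreducible_general (A B : Set (ℤ × ℤ))
    (hdist : ∀ a ∈ A, ∀ b ∈ B, 4 ≤ triGraph.dist a b)
    (S T : Set (ℤ × ℤ)) (hS : IsMIS S) (hT : IsMIS T) :
    ∃ U : Set (ℤ × ℤ), IsMIS U ∧ U ∩ A = S ∩ A ∧ U ∩ B = T ∩ B := by
  have hedist : ∀ a ∈ A, ∀ b ∈ B, 3 < triGraph.edist a b := fun a ha b hb =>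
    calc (3 : ℕ∞) < 4 := by norm_num
      _ ≤ triGraph.dist a b := by exact_mod_cast hdist a ha b hb
      _ ≤ triGraph.edist a b := SimpleGraph.coe_dist_le_edist a b
  obtain ⟨U, hU, hUA, hUB⟩ := SimpleGraph.exists_maximal_isIndepSet_inter_eq_of_lt_edist
    (isMIS_iff_maximal_isIndepSet.1 hS) (isMIS_iff_maximal_isIndepSet.1 hT) hedist
  exact ⟨U, isMIS_iff_maximal_isIndepSet.2 hU, hUA, hUB⟩

/-- Strong irreducibility of the recoverable system `X(𝔸)` with `r = 4`: any
two maximal independent sets can be glued along finite sets at graph distance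
at least 4. -/
theorem strongly_irreducible (A B : Set (ℤ × ℤ)) (hA : A.Finite) (hB : B.Finite)
    (hdist : ∀ a ∈ A, ∀ b ∈ B, 4 ≤ triGraph.dist a b)
    (S T : Set (ℤ × ℤ)) (hS : IsMIS S) (hT : IsMIS T) :
    ∃ U : Set (ℤ × ℤ), IsMIS U ∧ U ∩ A = S ∩ A ∧ U ∩ B = T ∩ B :=
  strongly_irreducible_general A B hdist S T hS hT
end

section
/- Empty faces of a maximal independent set have between 2 and 4 empty connected neighbors: let S ⊆ ℤ² be a maximal independent set of the triangular lattice and let F be a face that is empty with respect to S. Then the number of faces that are connected to F and empty with respect to S is at least 2 and at most 4. -/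
/-- A face (unit triangle) of the triangular lattice: a base point in `ℤ²`
together with an orientation (`true` = up-face, `false` = down-face). -/
abbrev Face : Type := (ℤ × ℤ) × Bool

/-- The vertex set of a face. -/
def faceVerts (F : Face) : Finset (ℤ × ℤ) :=
  if F.2 then {(F.1.1, F.1.2), (F.1.1 + 1, F.1.2), (F.1.1, F.1.2 + 1)}
  else {(F.1.1 + 1, F.1.2), (F.1.1, F.1.2 + 1), (F.1.1 + 1, F.1.2 + 1)}

/-- Two distinct faces are adjacent if their vertex sets share at least one site. -/
def FaceAdjacent (F G : Face) : Prop :=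
  F ≠ G ∧ (faceVerts F ∩ faceVerts G).Nonempty

/-- Two distinct faces are edge-connected if their vertex sets share exactly two sites. -/
def EdgeConnected (F G : Face) : Prop :=
  F ≠ G ∧ (faceVerts F ∩ faceVerts G).card = 2

/-- Two distinct faces are point-connected if their vertex sets share exactly
one site and no face is edge-connected to both of them. -/
def PointConnected (F G : Face) : Prop :=
  F ≠ G ∧ (faceVerts F ∩ faceVerts G).card = 1 ∧
    ¬ ∃ H : Face, EdgeConnected H F ∧ EdgeConnected H G

/-- Two faces are connected if they are edge-connected or point-connected. -/
def FaceConnected (F G : Face) : Prop :=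
  EdgeConnected F G ∨ PointConnected F G

/-- A face is empty with respect to `S` if none of its vertices lies in `S`. -/
def EmptyFace (S : Set (ℤ × ℤ)) (F : Face) : Prop :=
  ∀ v ∈ faceVerts F, v ∉ S

def emptyConnectedFaces (S : Set (ℤ × ℤ)) (F : Face) : Set Face :=
  {G | FaceConnected F G ∧ EmptyFace S G}

structure LatticeSymmetry where
  site : ℤ × ℤ ≃ ℤ × ℤ
  face : Face ≃ Face
  triAdj_site_iff : ∀ u v, TriAdj (site u) (site v) ↔ TriAdj u v
  faceVerts_face : ∀ F, faceVerts (face F) = (faceVerts F).map site.toEmbedding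

def originFace : Face := ((0, 0), true)

namespace LatticeSymmetry

variable (g : LatticeSymmetry)

theorem card_inter_faceVerts (F G : Face) :
    (faceVerts (g.face F) ∩ faceVerts (g.face G)).card = (faceVerts F ∩ faceVerts G).card := by
  rw [g.faceVerts_face, g.faceVerts_face, ← Finset.map_inter, Finset.card_map]

theorem edgeConnected_iff (F G : Face) :
    EdgeConnected (g.face F) (g.face G) ↔ EdgeConnected F G := by
  rw [EdgeConnected, EdgeConnected, g.card_inter_faceVerts, g.face.injective.ne_iff]

theorem pointConnected_iff (F G : Face) :
    PointConnected (g.face F) (g.face G) ↔ PointConnected F G := by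
  unfold PointConnected
  rw [g.card_inter_faceVerts, g.face.injective.ne_iff, g.face.surjective.exists]
  simp only [g.edgeConnected_iff]

theorem faceConnected_iff (F G : Face) :
    FaceConnected (g.face F) (g.face G) ↔ FaceConnected F G := by
  rw [FaceConnected, FaceConnected, g.edgeConnected_iff, g.pointConnected_iff]

theorem emptyFace_preimage_iff (S : Set (ℤ × ℤ)) (F : Face) :
    EmptyFace (g.site ⁻¹' S) F ↔ EmptyFace S (g.face F) := by
  simp only [EmptyFace, g.faceVerts_face, Finset.forall_mem_map, Set.mem_preimage]
  rfl

theorem isMIS_preimage {S : Set (ℤ × ℤ)} (hS : IsMIS S) : IsMIS (g.site ⁻¹' S) := by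
  refine ⟨fun u hu v hv huv => hS.1 _ hu _ hv ((g.triAdj_site_iff u v).2 huv), fun u hu => ?_⟩
  obtain ⟨v, hvS, huv⟩ := hS.2 (g.site u) hu
  refine ⟨g.site.symm v, by simpa using hvS, (g.triAdj_site_iff _ _).1 ?_⟩
  simpa using huv

theorem ncard_emptyConnectedFaces (S : Set (ℤ × ℤ)) (F : Face) :
    (emptyConnectedFaces S (g.face F)).ncard = (emptyConnectedFaces (g.site ⁻¹' S) F).ncard := by
  have : emptyConnectedFaces S (g.face F) = g.face '' emptyConnectedFaces (g.site ⁻¹' S) F := by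
    ext G
    obtain ⟨G, rfl⟩ := g.face.surjective G
    simp [emptyConnectedFaces, g.faceConnected_iff, g.emptyFace_preimage_iff]
  rw [this, Set.ncard_image_of_injective _ g.face.injective]

def translate (w : ℤ × ℤ) : LatticeSymmetry where
  site := Equiv.addRight w
  face := (Equiv.addRight w).prodCongr (Equiv.refl Bool)
  triAdj_site_iff u v := by simp [TriAdj]
  faceVerts_face := by
    rintro ⟨⟨i, j⟩, _ | _⟩ <;> ext ⟨x, y⟩ <;> simp [faceVerts, Prod.ext_iff] <;> omega

def reflect (c : ℤ × ℤ) : LatticeSymmetry where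
  site := Equiv.subLeft c
  face := (Equiv.subLeft (c - (1, 1))).prodCongr Equiv.boolNot
  triAdj_site_iff u v := by simp [TriAdj]; omega
  faceVerts_face := by
    rintro ⟨⟨i, j⟩, _ | _⟩ <;> ext ⟨x, y⟩ <;> simp [faceVerts, Prod.ext_iff] <;> omega

theorem exists_face_originFace (F : Face) : ∃ g : LatticeSymmetry, g.face originFace = F := by
  obtain ⟨⟨i, j⟩, _ | _⟩ := F
  · exact ⟨reflect (i + 1, j + 1), by simp [reflect, originFace]⟩
  · exact ⟨translate (i, j), by simp [translate, originFace]⟩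

end LatticeSymmetry

def triDirections : Finset (ℤ × ℤ) := {(1, 0), (-1, 0), (0, 1), (0, -1), (1, -1), (-1, 1)}

theorem triAdj_iff_sub_mem {u v : ℤ × ℤ} : TriAdj u v ↔ u - v ∈ triDirections := Iff.rfl

instance inst_s17 : DecidableRel TriAdj := fun _ _ => decidable_of_iff' _ triAdj_iff_sub_mem

theorem IsIndependent.notMem_of_triAdj {S : Set (ℤ × ℤ)} (hS : IsIndependent S) {u v : ℤ × ℤ}
    (hu : u ∈ S) (huv : TriAdj u v) : v ∉ S :=
  fun hv => hS u hu v hv huv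

def originEdgeNeighbors : Finset Face := {((0, 0), false), ((-1, 0), false), ((0, -1), false)}

def originNeighbors : Finset Face :=
  {((0, 0), false), ((-1, 0), false), ((0, -1), false),
    ((-1, -1), false), ((1, -1), false), ((-1, 1), false)}

theorem edgeConnected_comm (F G : Face) : EdgeConnected F G ↔ EdgeConnected G F := by
  rw [EdgeConnected, EdgeConnected, ne_comm, Finset.inter_comm]

theorem EdgeConnected.inter_nonempty {F G : Face} (h : EdgeConnected F G) :
    (faceVerts F ∩ faceVerts G).Nonempty :=
  Finset.card_pos.1 (by rw [h.2]; norm_num)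

theorem FaceConnected.inter_nonempty {F G : Face} (h : FaceConnected F G) :
    (faceVerts F ∩ faceVerts G).Nonempty :=
  h.elim EdgeConnected.inter_nonempty fun h => Finset.card_pos.1 (by rw [h.2.1]; norm_num)

theorem inter_faceVerts_originFace_nonempty_of_mem_originNeighbors :
    ∀ G ∈ originNeighbors, (faceVerts originFace ∩ faceVerts G).Nonempty := by
  decide

theorem originEdgeNeighbors_subset_originNeighbors : originEdgeNeighbors ⊆ originNeighbors := by
  decide

theorem mem_Icc_of_inter_faceVerts_originFace_nonempty {p q : ℤ} {b : Bool}
    (h : (faceVerts originFace ∩ faceVerts ((p, q), b)).Nonempty) :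
    p ∈ Set.Icc (-1) 1 ∧ q ∈ Set.Icc (-1) 1 := by
  obtain ⟨⟨x, y⟩, hv⟩ := h
  simp only [Set.mem_Icc]
  cases b <;> simp [faceVerts, originFace, Prod.ext_iff] at hv <;> omega

theorem edgeConnected_originFace_iff (G : Face) :
    EdgeConnected originFace G ↔ G ∈ originEdgeNeighbors := by
  suffices ∀ G, (faceVerts originFace ∩ faceVerts G).Nonempty →
      (EdgeConnected originFace G ↔ G ∈ originEdgeNeighbors) from
    ⟨fun h => (this G h.inter_nonempty).1 h, fun h => (this G
      (inter_faceVerts_originFace_nonempty_of_mem_originNeighbors G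
        (originEdgeNeighbors_subset_originNeighbors h))).2 h⟩
  rintro ⟨⟨p, q⟩, b⟩ h
  obtain ⟨⟨hp₁, hp₂⟩, hq₁, hq₂⟩ := mem_Icc_of_inter_faceVerts_originFace_nonempty h
  unfold EdgeConnected
  interval_cases p <;> interval_cases q <;> cases b <;> decide

theorem faceConnected_originFace_iff (G : Face) :
    FaceConnected originFace G ↔ G ∈ originNeighbors := by
  suffices ∀ G, (faceVerts originFace ∩ faceVerts G).Nonempty →
      (FaceConnected originFace G ↔ G ∈ originNeighbors) from
    ⟨fun h => (this G h.inter_nonempty).1 h, fun h => (this G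
      (inter_faceVerts_originFace_nonempty_of_mem_originNeighbors G h)).2 h⟩
  rintro ⟨⟨p, q⟩, b⟩ h
  obtain ⟨⟨hp₁, hp₂⟩, hq₁, hq₂⟩ := mem_Icc_of_inter_faceVerts_originFace_nonempty h
  have hH : ∀ G, (∃ H, EdgeConnected H originFace ∧ EdgeConnected H G) ↔
      ∃ H ∈ originEdgeNeighbors, EdgeConnected H G := by
    simp only [edgeConnected_comm _ originFace, edgeConnected_originFace_iff, implies_true]
  simp only [FaceConnected, PointConnected, hH]
  unfold EdgeConnected
  interval_cases p <;> interval_cases q <;> cases b <;> decide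

theorem ncard_add_two_le_card {α : Type*} {s : Set α} {t : Finset α} (hst : s ⊆ t) {a b : α}
    (ha : a ∈ t) (hb : b ∈ t) (hab : a ≠ b) (has : a ∉ s) (hbs : b ∉ s) :
    s.ncard + 2 ≤ t.card := by
  have hdisj : Disjoint s {a, b} := Set.disjoint_left.2 fun x hx hx' => by
    rcases hx' with rfl | rfl <;> contradiction
  calc s.ncard + 2 = (s ∪ {a, b}).ncard := by
        rw [Set.ncard_union_eq hdisj (t.finite_toSet.subset hst), Set.ncard_pair hab]
    _ ≤ (t : Set α).ncard :=
        Set.ncard_le_ncard (Set.union_subset hst (Set.pair_subset ha hb)) t.finite_toSet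
    _ = t.card := Set.ncard_coe_finset t

theorem mem_emptyConnectedFaces_originFace {S : Set (ℤ × ℤ)} {G : Face} :
    G ∈ emptyConnectedFaces S originFace ↔ G ∈ originNeighbors ∧ EmptyFace S G := by
  rw [emptyConnectedFaces, Set.mem_ofPred_eq, faceConnected_originFace_iff]

theorem emptyConnectedFaces_originFace_subset (S : Set (ℤ × ℤ)) :
    emptyConnectedFaces S originFace ⊆ originNeighbors :=
  fun _ hG => (mem_emptyConnectedFaces_originFace.1 hG).1

theorem IsIndependent.two_le_ncard_emptyConnectedFaces_originFace {S : Set (ℤ × ℤ)}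
    (hS : IsIndependent S) (hF : EmptyFace S originFace) :
    2 ≤ (emptyConnectedFaces S originFace).ncard := by
  set X := emptyConnectedFaces S originFace
  have two_le {G₁ G₂ : Face} (h₁ : G₁ ∈ X) (h₂ : G₂ ∈ X) (h : G₁ ≠ G₂) : 2 ≤ X.ncard :=
    (Set.one_lt_ncard ((originNeighbors.finite_toSet).subset
      (emptyConnectedFaces_originFace_subset S))).2 ⟨G₁, h₁, G₂, h₂, h⟩
  have mem {G : Face} (hG : G ∈ originNeighbors) (hGS : ∀ v ∈ faceVerts G, v ∉ S) : G ∈ X :=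
    mem_emptyConnectedFaces_originFace.2 ⟨hG, hGS⟩
  have h₀₀ : (0, 0) ∉ S := hF _ (by decide)
  have h₁₀ : (1, 0) ∉ S := hF _ (by decide)
  have h₀₁ : (0, 1) ∉ S := hF _ (by decide)
  have hE₁ : (1, 1) ∉ S → ((0, 0), false) ∈ X := fun h =>
    mem (by decide) (by simp [faceVerts, *])
  have hE₂ : (-1, 1) ∉ S → ((-1, 0), false) ∈ X := fun h =>
    mem (by decide) (by simp [faceVerts, *])
  have hE₃ : (1, -1) ∉ S → ((0, -1), false) ∈ X := fun h =>
    mem (by decide) (by simp [faceVerts, *])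
  have hP₁ : (1, -1) ∈ S → (-1, 1) ∈ S → ((-1, -1), false) ∈ X := fun h h' =>
    mem (by decide) (by
      simp [faceVerts, h₀₀, hS.notMem_of_triAdj h (v := (0, -1)) (by decide),
        hS.notMem_of_triAdj h' (v := (-1, 0)) (by decide)])
  have hP₂ : (1, -1) ∈ S → (1, 1) ∈ S → ((1, -1), false) ∈ X := fun h h' =>
    mem (by decide) (by
      simp [faceVerts, h₁₀, hS.notMem_of_triAdj h (v := (2, -1)) (by decide),
        hS.notMem_of_triAdj h' (v := (2, 0)) (by decide)])
  have hP₃ : (-1, 1) ∈ S → (1, 1) ∈ S → ((-1, 1), false) ∈ X := fun h h' =>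
    mem (by decide) (by
      simp [faceVerts, h₀₁, hS.notMem_of_triAdj h (v := (-1, 2)) (by decide),
        hS.notMem_of_triAdj h' (v := (0, 2)) (by decide)])
  by_cases ha : (1, -1) ∈ S <;> by_cases hb : (-1, 1) ∈ S <;> by_cases hc : (1, 1) ∈ S
  · exact two_le (hP₁ ha hb) (hP₂ ha hc) (by decide)
  · exact two_le (hP₁ ha hb) (hE₁ hc) (by decide)
  · exact two_le (hP₂ ha hc) (hE₂ hb) (by decide)
  · exact two_le (hE₁ hc) (hE₂ hb) (by decide)
  · exact two_le (hP₃ hb hc) (hE₃ ha) (by decide)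
  · exact two_le (hE₃ ha) (hE₁ hc) (by decide)
  · exact two_le (hE₃ ha) (hE₂ hb) (by decide)
  · exact two_le (hE₃ ha) (hE₂ hb) (by decide)

theorem exists_mem_originNeighbors_of_triAdj {u v : ℤ × ℤ} (hu : u ∈ faceVerts originFace)
    (huv : TriAdj u v) (hv : v ∉ faceVerts originFace) :
    ∃ G ∈ originNeighbors, u ∈ faceVerts G ∧ v ∈ faceVerts G := by
  have key : ∀ u ∈ faceVerts originFace, ∀ d ∈ triDirections, u - d ∉ faceVerts originFace →
      ∃ G ∈ originNeighbors, u ∈ faceVerts G ∧ u - d ∈ faceVerts G := by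
    decide
  simpa using key u hu (u - v) (triAdj_iff_sub_mem.1 huv) (by simpa using hv)

theorem not_faceVerts_originFace_subset :
    ∀ G ∈ originNeighbors, ¬ faceVerts originFace ⊆ faceVerts G := by
  decide

theorem ncard_emptyConnectedFaces_originFace_le {S : Set (ℤ × ℤ)}
    (hS : ∀ u ∉ S, ∃ v ∈ S, TriAdj u v) (hF : EmptyFace S originFace) :
    (emptyConnectedFaces S originFace).ncard ≤ 4 := by
  have blocked : ∀ u ∈ faceVerts originFace,
      ∃ G ∈ originNeighbors, u ∈ faceVerts G ∧ ¬ EmptyFace S G := by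
    intro u hu
    obtain ⟨v, hvS, huv⟩ := hS u (hF u hu)
    obtain ⟨G, hG, huG, hvG⟩ :=
      exists_mem_originNeighbors_of_triAdj hu huv fun hv => hF v hv hvS
    exact ⟨G, hG, huG, fun hGS => hGS v hvG hvS⟩
  obtain ⟨G₀₀, hG₀₀, h₀₀, hn₀₀⟩ := blocked (0, 0) (by decide)
  obtain ⟨G₁₀, hG₁₀, h₁₀, hn₁₀⟩ := blocked (1, 0) (by decide)
  obtain ⟨G₀₁, hG₀₁, h₀₁, hn₀₁⟩ := blocked (0, 1) (by decide)
  have hnotMem {G : Face} (hn : ¬ EmptyFace S G) : G ∉ emptyConnectedFaces S originFace :=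
    fun hG => hn (mem_emptyConnectedFaces_originFace.1 hG).2
  obtain ⟨G₁, hG₁, G₂, hG₂, hne, hn₁, hn₂⟩ : ∃ G₁ ∈ originNeighbors, ∃ G₂ ∈ originNeighbors,
      G₁ ≠ G₂ ∧ ¬ EmptyFace S G₁ ∧ ¬ EmptyFace S G₂ := by
    by_cases h : G₀₀ = G₁₀
    · subst h
      refine ⟨G₀₀, hG₀₀, G₀₁, hG₀₁, ?_, hn₀₀, hn₀₁⟩
      rintro rfl
      refine not_faceVerts_originFace_subset G₀₀ hG₀₀ fun w hw => ?_
      simp only [originFace, faceVerts, if_true, Finset.mem_insert, Finset.mem_singleton] at hw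
      rcases hw with rfl | rfl | rfl <;> assumption
    · exact ⟨G₀₀, hG₀₀, G₁₀, hG₁₀, h, hn₀₀, hn₁₀⟩
  have := ncard_add_two_le_card (emptyConnectedFaces_originFace_subset S) hG₁ hG₂ hne
    (hnotMem hn₁) (hnotMem hn₂)
  have hcard : originNeighbors.card = 6 := rfl
  omega

/-- An empty face of a maximal independent set has between 2 and 4 empty
connected neighboring faces. -/
theorem empty_face_neighbors (S : Set (ℤ × ℤ)) (hS : IsMIS S)
    (F : Face) (hF : EmptyFace S F) :
    2 ≤ ({G : Face | FaceConnected F G ∧ EmptyFace S G}).ncard ∧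
      ({G : Face | FaceConnected F G ∧ EmptyFace S G}).ncard ≤ 4 := by
  obtain ⟨g, rfl⟩ := LatticeSymmetry.exists_face_originFace F
  rw [← g.emptyFace_preimage_iff] at hF
  have hS' := g.isMIS_preimage hS
  change 2 ≤ (emptyConnectedFaces S _).ncard ∧ (emptyConnectedFaces S _).ncard ≤ 4
  rw [g.ncard_emptyConnectedFaces]
  exact ⟨hS'.1.two_le_ncard_emptyConnectedFaces_originFace hF,
    ncard_emptyConnectedFaces_originFace_le hS'.2 hF⟩
end
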